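/- Let v₁ = (0,0,0), v₂ = (1000,0,0), v₃ = (113,462,0), v₄ = (636,−387,71), v₅ = (194,203,−605), v₆ = (304,−194,307), v₇ = (830,447,−253), v₈ = (330,−176,−855), v₉ = (570,−354,99), v₁₀ = (622,136,−771) in ℝ³, and define edge vectors eᵢ = v_{i+1} − vᵢ for i = 1, …, 9 and e₁₀ = v₁ − v₁₀. Then there is no w ∈ ℝ³ such that (−1)^{i+1} (w · eᵢ) > 0 for every i ∈ {1, …, 10}. -/

import Mathlib

/-!
Only the four constraints for `e₁, e₅, e₆, e₉` matter: the signed edges `e₁, e₅, -e₆, e₉`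
have the vanishing positive combination with multipliers `423237, 35408750, 12686250, 45284000`
(a Farkas certificate), so pairing it with `w` would write `0` as a sum of positive numbers.
-/

/-- The vertices of the paper's 10-stick polygonal realization of the knot `8_11`.
Here `vert8_11 i` is the paper's vertex `v_(i+1)`. -/
noncomputable def vert8_11 : Fin 10 → (Fin 3 → ℝ) :=
  ![![0, 0, 0], ![1000, 0, 0], ![113, 462, 0], ![636, -387, 71], ![194, 203, -605], ![304, -194, 307], ![830, 447, -253], ![330, -176, -855], ![570, -354, 99], ![622, 136, -771]]

/-- The edge vectors `eᵢ = v_(i+1) − vᵢ` (cyclically, so `e₁₀ = v₁ − v₁₀`);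
here `edge8_11 i` is the paper's `e_(i+1)`, using wrap-around addition on `Fin 10`. -/
noncomputable def edge8_11 (i : Fin 10) : Fin 3 → ℝ :=
  vert8_11 (i + 1) - vert8_11 i

open Matrix

theorem not_forall_pos_dotProduct_of_sum_smul_eq_zero {R ι n : Type*} [CommRing R]
    [PartialOrder R] [IsStrictOrderedRing R] [Fintype ι] [Fintype n]
    (u : ι → n → R) (c : ι → R) (hc : 0 ≤ c) (hc_ne : c ≠ 0)
    (hsum : ∑ i, c i • u i = 0) (w : n → R) : ¬ ∀ i, 0 < w ⬝ᵥ u i := by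
  intro hw
  obtain ⟨k, hk⟩ : ∃ k, c k ≠ 0 := Function.ne_iff.mp hc_ne
  have hpos : 0 < ∑ i, c i * (w ⬝ᵥ u i) :=
    Finset.sum_pos' (fun i _ => mul_nonneg (hc i) (hw i).le)
      ⟨k, Finset.mem_univ k, mul_pos (lt_of_le_of_ne (hc k) hk.symm) (hw k)⟩
  have hzero : ∑ i, c i * (w ⬝ᵥ u i) = 0 := by
    simp only [← smul_eq_mul, ← dotProduct_smul, ← dotProduct_sum, hsum, dotProduct_zero]
  exact hpos.ne' hzero

noncomputable def certificate8_11 : Fin 10 → ℝ :=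
  ![423237, 0, 0, 0, 35408750, 12686250, 0, 0, 45284000, 0]

theorem certificate8_11_nonneg : 0 ≤ certificate8_11 := by
  intro i
  fin_cases i <;> norm_num [certificate8_11]

theorem certificate8_11_ne_zero : certificate8_11 ≠ 0 :=
  fun h => by simpa [certificate8_11] using congrFun h 0

theorem edge8_11_eq : edge8_11 = ![![1000, 0, 0], ![-887, 462, 0], ![523, -849, 71],
    ![-442, 590, -676], ![110, -397, 912], ![526, 641, -560], ![-500, -623, -602],
    ![240, -178, 954], ![52, 490, -870], ![-622, -136, 771]] := by
  ext i j
  fin_cases i <;> fin_cases j <;> norm_num [edge8_11, vert8_11, Fin.add_def]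

theorem sum_certificate8_11_smul_signed_edge :
    ∑ i, certificate8_11 i • ((-1 : ℝ) ^ (i : ℕ) • edge8_11 i) = 0 := by
  ext j
  fin_cases j <;> norm_num [Fin.sum_univ_succ, certificate8_11, edge8_11_eq]

/-- There is no `w ∈ ℝ³` such that `(−1)^(i+1) (w · eᵢ) > 0` for every
`i ∈ {1, …, 10}`: no projection of this polygon (the knot `8_11`) to a line has
5 local maxima. (With 0-based indexing `i : Fin 10`, the sign is `(−1)^i`.) -/
theorem no_alternating_direction_8_11 :
    ¬ ∃ w : Fin 3 → ℝ, ∀ i : Fin 10,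
        0 < (-1 : ℝ) ^ (i : ℕ) * ∑ j : Fin 3, w j * edge8_11 i j := by
  rintro ⟨w, hw⟩
  refine not_forall_pos_dotProduct_of_sum_smul_eq_zero _ _ certificate8_11_nonneg
    certificate8_11_ne_zero sum_certificate8_11_smul_signed_edge w fun i => ?_
  rw [dotProduct_smul, smul_eq_mul]
  exact hw i
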